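/- arXiv:2008.03688 — 2 statements merged into one kernel-verified Lean document; each statement's English description precedes it below -/
import Mathlib

section
/- Let k be a perfect field with algebraic closure k̄, and let a₁ ∈ k̄ ∖ k be an element of degree 2 over k with Galois conjugate a₂ (so that a₁ + a₂ ∈ k and a₁·a₂ ∈ k). Then the subgroup of PGL₂(k) fixing both points [a₁:1] and [a₂:1] of ℙ¹(k̄) consists precisely of the classes of the matrices M_{[b:c]} with first row (b(a₁+a₂)+c, −b·a₁·a₂) and second row (b, c), for [b:c] ∈ ℙ¹(k); every such matrix with (b,c) ∈ k² ∖ {(0,0)} is invertible, and the map [b:c] ↦ class of M_{[b:c]} is a bijection from ℙ¹(k) onto this subgroup. In particular, this subgroup is in bijection with ℙ¹(k) and hence has at least 3 elements. -/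
open scoped LinearAlgebra.Projectivization

namespace CremonaPaper

variable {k K : Type} [Field k] [Field K] [Algebra k K]

/-- The coordinatewise action of the Galois group `Gal(K/k)` on the projective space
`ℙ^{n-1}(K)`: an automorphism is applied to the homogeneous coordinates. -/
noncomputable def galAct {n : ℕ} (g : K ≃ₐ[k] K) (P : ℙ K (Fin n → K)) :
    ℙ K (Fin n → K) :=
  Projectivization.mk K (fun i => g (P.rep i)) (by
    intro h
    apply P.rep_nonzero
    funext i
    have hi : g (P.rep i) = 0 := congrFun h i
    show P.rep i = 0
    exact g.injective (by rw [map_zero]; exact hi))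

/-- The action of an invertible matrix on projective space. -/
noncomputable def mulAct {F : Type} [Field F] {n : ℕ} (A : Matrix (Fin n) (Fin n) F)
    (hA : IsUnit A) (P : ℙ F (Fin n → F)) : ℙ F (Fin n → F) :=
  Projectivization.mk F (A.mulVec P.rep) (by
    intro h
    apply P.rep_nonzero
    have h1 : ((hA.unit⁻¹ : (Matrix (Fin n) (Fin n) F)ˣ) : Matrix (Fin n) (Fin n) F).mulVec
        (A.mulVec P.rep) = 0 := by rw [h, Matrix.mulVec_zero]
    rw [Matrix.mulVec_mulVec] at h1
    have h2 := hA.unit.inv_mul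
    rw [hA.unit_spec] at h2
    rw [h2, Matrix.one_mulVec] at h1
    exact h1)

/-- The action of `GL_n(k)` on `ℙ^{n-1}(K)`, via the inclusion `GL_n(k) ⊆ GL_n(K)` given by
the algebra map.  This action factors through `PGL_n(k)`, so that existence statements about
`PGL_n(k)` translate to existence statements about `GL_n(k)`. -/
noncomputable def glAct {n : ℕ} (M : GL (Fin n) k) (P : ℙ K (Fin n → K)) :
    ℙ K (Fin n → K) :=
  mulAct ((M : Matrix (Fin n) (Fin n) k).map (algebraMap k K))
    (by
      have h : IsUnit ((algebraMap k K).mapMatrix (M : Matrix (Fin n) (Fin n) k)) :=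
        (Units.isUnit M).map (algebraMap k K).mapMatrix
      simpa [RingHom.mapMatrix_apply] using h) P

/-- The action of `GL_n(F)` on `ℙ^{n-1}(F)`. -/
noncomputable def glActSelf {F : Type} [Field F] {n : ℕ} (M : GL (Fin n) F)
    (P : ℙ F (Fin n → F)) : ℙ F (Fin n → F) :=
  mulAct (M : Matrix (Fin n) (Fin n) F) (Units.isUnit M) P

/-- A point of `ℙ^{n-1}(K)` is defined over the intermediate field `F` if it admits a
representative with all homogeneous coordinates in `F`. -/
def DefinedOver {n : ℕ} (F : IntermediateField k K) (P : ℙ K (Fin n → K)) : Prop :=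
  ∃ v : Fin n → K, (∀ i, v i ∈ F) ∧ ∃ hv : v ≠ 0, P = Projectivization.mk K v hv

/-- The point `[x:1]` of `ℙ¹(K)`. -/
noncomputable def affPt {F : Type} [Field F] (x : F) : ℙ F (Fin 2 → F) :=
  Projectivization.mk F ![x, 1] (by
    intro hc
    simpa using congrFun hc 1)

lemma mulVec_ne_zero {F : Type} [Field F] {n : ℕ} {A : Matrix (Fin n) (Fin n) F}
    (hA : IsUnit A) {v : Fin n → F} (hv : v ≠ 0) : A.mulVec v ≠ 0 := by
  intro h
  apply hv
  have h1 : ((hA.unit⁻¹ : (Matrix (Fin n) (Fin n) F)ˣ) : Matrix (Fin n) (Fin n) F).mulVec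
      (A.mulVec v) = 0 := by rw [h, Matrix.mulVec_zero]
  rw [Matrix.mulVec_mulVec] at h1
  have h2 := hA.unit.inv_mul
  rw [hA.unit_spec] at h2
  rw [h2, Matrix.one_mulVec] at h1
  exact h1

lemma mulAct_mk {F : Type} [Field F] {n : ℕ} (A : Matrix (Fin n) (Fin n) F)
    (hA : IsUnit A) (v : Fin n → F) (hv : v ≠ 0) :
    mulAct A hA (Projectivization.mk F v hv) = Projectivization.mk F (A.mulVec v)
      (mulVec_ne_zero hA hv) := by
  unfold mulAct
  rw [Projectivization.mk_eq_mk_iff]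
  obtain ⟨a, ha⟩ := Projectivization.exists_smul_eq_mk_rep F v hv
  exact ⟨a, by rw [← ha, Matrix.mulVec_smul]⟩

lemma vne {F : Type} [Field F] (x : F) : (![x, 1] : Fin 2 → F) ≠ 0 := by
  intro hc; simpa using congrFun hc 1

lemma fix_iff (M : GL (Fin 2) k) (a : K) :
    glAct M (affPt a) = affPt a ↔
      algebraMap k K (M.val 0 0) * a + algebraMap k K (M.val 0 1) =
        (algebraMap k K (M.val 1 0) * a + algebraMap k K (M.val 1 1)) * a := by
  set A := (M.val).map (algebraMap k K) with hAdef
  have hA : IsUnit A := by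
    have h : IsUnit ((algebraMap k K).mapMatrix (M : Matrix (Fin 2) (Fin 2) k)) :=
      (Units.isUnit M).map (algebraMap k K).mapMatrix
    simpa [RingHom.mapMatrix_apply] using h
  have hmv : A.mulVec ![a, 1] = ![algebraMap k K (M.val 0 0) * a + algebraMap k K (M.val 0 1),
      algebraMap k K (M.val 1 0) * a + algebraMap k K (M.val 1 1)] := by
    funext i
    fin_cases i <;>
      simp [hAdef, Matrix.mulVec, dotProduct, Fin.sum_univ_two, Matrix.map_apply]
  show mulAct A _ (affPt a) = affPt a ↔ _
  rw [affPt, mulAct_mk, Projectivization.mk_eq_mk_iff]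
  constructor
  · rintro ⟨u, hu⟩
    have h0 := congrFun hu 0
    have h1 := congrFun hu 1
    simp [hmv, Units.smul_def] at h0 h1
    rw [← h0, h1]
  · intro h
    have hw : algebraMap k K (M.val 1 0) * a + algebraMap k K (M.val 1 1) ≠ 0 := by
      intro hw0
      apply mulVec_ne_zero hA (vne a)
      rw [hmv]
      funext i
      fin_cases i
      · show algebraMap k K (M.val 0 0) * a + algebraMap k K (M.val 0 1) = 0
        rw [h, hw0, zero_mul]
      · exact hw0
    refine ⟨Units.mk0 _ hw, ?_⟩
    funext i
    fin_cases i <;> simp [hmv, Units.smul_def]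
    linear_combination -h


variable [PerfectField k] [IsAlgClosure k K]

/-- from the proof of Lemma 6.16; description of `Aut_k(ℙ¹, p₁, p₂)` for a
point `{[a₁:1],[a₂:1]}` of degree `2`.
The subgroup of `PGL₂(k)` fixing both `[a₁:1]` and `[a₂:1]` consists precisely of the classes
of the matrices `M_{[b:c]} = !![b(a₁+a₂)+c, -b·a₁a₂; b, c]` with `[b:c] ∈ ℙ¹(k)`; every such
matrix is invertible, the assignment `[b:c] ↦ [M_{[b:c]}]` is injective (proportional matrices
correspond to proportional pairs `(b,c)`), and the subgroup has at least `3` elements. -/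
theorem stmt8 (a₁ a₂ : K) (s p : k)
    (hs : a₁ + a₂ = algebraMap k K s) (hp : a₁ * a₂ = algebraMap k K p)
    (hne : a₁ ≠ a₂) (hdeg2 : a₁ ∉ Set.range (algebraMap k K)) :
    (∀ M : GL (Fin 2) k,
      (glAct M (affPt a₁) = affPt a₁ ∧ glAct M (affPt a₂) = affPt a₂) ↔
      ∃ b c : k, (b ≠ 0 ∨ c ≠ 0) ∧ ∃ u : kˣ,
        (M : Matrix (Fin 2) (Fin 2) k) = (u : k) • !![b * s + c, -(b * p); b, c]) ∧
    (∀ b c : k, (b ≠ 0 ∨ c ≠ 0) → IsUnit !![b * s + c, -(b * p); b, c]) ∧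
    (∀ b c b' c' : k, (b ≠ 0 ∨ c ≠ 0) → (b' ≠ 0 ∨ c' ≠ 0) →
      ((∃ u : kˣ, !![b' * s + c', -(b' * p); b', c'] =
          (u : k) • !![b * s + c, -(b * p); b, c]) ↔
        (∃ u : kˣ, b' = (u : k) * b ∧ c' = (u : k) * c))) ∧
    (∃ M₁ M₂ M₃ : GL (Fin 2) k,
      (glAct M₁ (affPt a₁) = affPt a₁ ∧ glAct M₁ (affPt a₂) = affPt a₂) ∧
      (glAct M₂ (affPt a₁) = affPt a₁ ∧ glAct M₂ (affPt a₂) = affPt a₂) ∧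
      (glAct M₃ (affPt a₁) = affPt a₁ ∧ glAct M₃ (affPt a₂) = affPt a₂) ∧
      (¬ ∃ u : kˣ, (M₂ : Matrix (Fin 2) (Fin 2) k) =
        (u : k) • (M₁ : Matrix (Fin 2) (Fin 2) k)) ∧
      (¬ ∃ u : kˣ, (M₃ : Matrix (Fin 2) (Fin 2) k) =
        (u : k) • (M₁ : Matrix (Fin 2) (Fin 2) k)) ∧
      (¬ ∃ u : kˣ, (M₃ : Matrix (Fin 2) (Fin 2) k) =
        (u : k) • (M₂ : Matrix (Fin 2) (Fin 2) k))) := by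
  set f := algebraMap k K with hf
  have hfi : Function.Injective f := f.injective
  -- key: a linear dependence over k of a₁ and 1 is trivial
  have keyA : ∀ x y : k, f x * a₁ + f y = 0 → x = 0 ∧ y = 0 := by
    intro x y h
    have hx : x = 0 := by
      by_contra hx
      apply hdeg2
      refine ⟨-y / x, ?_⟩
      have : f x ≠ 0 := fun h0 => hx (hfi (by rwa [map_zero]))
      rw [map_div₀, map_neg, div_eq_iff this]
      linear_combination -h
    refine ⟨hx, hfi ?_⟩
    rw [map_zero]
    rw [hx, map_zero, zero_mul, zero_add] at h
    exact h
  have ha₁sq : a₁ ^ 2 = f s * a₁ - f p := by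
    linear_combination a₁ * hs - hp
  have ha₂sq : a₂ ^ 2 = f s * a₂ - f p := by
    rw [← hs, ← hp]; ring
  have ha₂deg : a₂ ∉ Set.range f := by
    rintro ⟨t, ht⟩
    exact hdeg2 ⟨s - t, by rw [map_sub]; linear_combination -hs - ht⟩
  -- nonvanishing of f b * a + f c
  have hnz₁ : ∀ b c : k, (b ≠ 0 ∨ c ≠ 0) → f b * a₁ + f c ≠ 0 := by
    intro b c hbc h
    obtain ⟨hb, hc⟩ := keyA b c h
    rcases hbc with h' | h' <;> exact h' ‹_›
  have hnz₂ : ∀ b c : k, (b ≠ 0 ∨ c ≠ 0) → f b * a₂ + f c ≠ 0 := by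
    intro b c hbc h
    have hb : b = 0 := by
      by_contra hb
      apply ha₂deg
      refine ⟨-c / b, ?_⟩
      have : f b ≠ 0 := fun h0 => hb (hfi (by rwa [map_zero]))
      rw [map_div₀, map_neg, div_eq_iff this]
      linear_combination -h
    rw [hb, map_zero, zero_mul, zero_add] at h
    have hc : c = 0 := hfi (by rwa [map_zero])
    rcases hbc with h' | h' <;> exact h' ‹_›
  -- invertibility
  have part2 : ∀ b c : k, (b ≠ 0 ∨ c ≠ 0) → IsUnit !![b * s + c, -(b * p); b, c] := by
    intro b c hbc
    rw [Matrix.isUnit_iff_isUnit_det, Matrix.det_fin_two_of, isUnit_iff_ne_zero]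
    intro hdet
    have : f ((b * s + c) * c - -(b * p) * b) = 0 := by rw [hdet, map_zero]
    rw [map_sub, map_mul, map_mul, map_add, map_mul, map_neg, map_mul] at this
    apply hnz₁ b c hbc
    have hfac : (f b * a₁ + f c) * (f b * a₂ + f c) = 0 := by
      rw [← this, ← hs, ← hp]; ring
    rcases mul_eq_zero.1 hfac with h | h
    · exact h
    · exact absurd h (hnz₂ b c hbc)
  -- fixing lemma
  have fix_of : ∀ (a : K), a ^ 2 = f s * a - f p → ∀ (M : GL (Fin 2) k) (b c : k) (u : kˣ),
      (M : Matrix (Fin 2) (Fin 2) k) = (u : k) • !![b * s + c, -(b * p); b, c] →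
      glAct M (affPt a) = affPt a := by
    intro a ha M b c u hM
    rw [fix_iff]
    have e00 : M.val 0 0 = u * (b * s + c) := by rw [hM]; simp
    have e01 : M.val 0 1 = u * -(b * p) := by rw [hM]; simp
    have e10 : M.val 1 0 = u * b := by rw [hM]; simp
    have e11 : M.val 1 1 = u * c := by rw [hM]; simp
    rw [e00, e01, e10, e11]
    push_cast [hf]
    linear_combination (-(f (u:k)) * f b) * ha
  -- part 1
  have part1 : ∀ M : GL (Fin 2) k,
      (glAct M (affPt a₁) = affPt a₁ ∧ glAct M (affPt a₂) = affPt a₂) ↔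
      ∃ b c : k, (b ≠ 0 ∨ c ≠ 0) ∧ ∃ u : kˣ,
        (M : Matrix (Fin 2) (Fin 2) k) = (u : k) • !![b * s + c, -(b * p); b, c] := by
    intro M
    constructor
    · rintro ⟨h1, _⟩
      rw [fix_iff] at h1
      set α := M.val 0 0; set β := M.val 0 1; set γ := M.val 1 0; set δ := M.val 1 1
      have key : f (α - γ * s - δ) * a₁ + f (β + γ * p) = 0 := by
        push_cast [hf]
        linear_combination h1 + f γ * ha₁sq
      obtain ⟨h2, h3⟩ := keyA _ _ key
      have hα : α = γ * s + δ := by linear_combination h2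
      have hβ : β = -(γ * p) := by linear_combination h3
      refine ⟨γ, δ, ?_, 1, ?_⟩
      · by_contra hc
        push_neg at hc
        obtain ⟨hγ, hδ⟩ := hc
        have : M.val = 0 := by
          rw [Matrix.eta_fin_two M.val]
          show !![α, β; γ, δ] = 0
          rw [hα, hβ, hγ, hδ]
          ext i j; fin_cases i <;> fin_cases j <;> simp
        exact (Units.isUnit M).ne_zero this
      · rw [Units.val_one, one_smul, Matrix.eta_fin_two M.val]
        show !![α, β; γ, δ] = _
        rw [hα, hβ]
    · rintro ⟨b, c, hbc, u, hM⟩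
      exact ⟨fix_of a₁ ha₁sq M b c u hM, fix_of a₂ ha₂sq M b c u hM⟩
  refine ⟨part1, part2, ?_, ?_⟩
  · intro b c b' c' hbc hbc'
    constructor
    · rintro ⟨u, hu⟩
      refine ⟨u, ?_, ?_⟩
      · have := congrFun (congrFun hu 1) 0; simpa using this
      · have := congrFun (congrFun hu 1) 1; simpa using this
    · rintro ⟨u, hb', hc'⟩
      refine ⟨u, ?_⟩
      subst hb' hc'
      ext i j; fin_cases i <;> fin_cases j <;> simp <;> ring
  · -- three elements
    have h1 := part2 0 1 (Or.inr one_ne_zero)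
    have h2 := part2 1 0 (Or.inl one_ne_zero)
    have h3 := part2 1 1 (Or.inl one_ne_zero)
    refine ⟨h1.unit, h2.unit, h3.unit, ?_, ?_, ?_, ?_, ?_, ?_⟩
    · constructor <;>
      · apply fix_of _ (by assumption) _ 0 1 1
        rw [Units.val_one, one_smul, h1.unit_spec]
    · constructor <;>
      · apply fix_of _ (by assumption) _ 1 0 1
        rw [Units.val_one, one_smul, h2.unit_spec]
    · constructor <;>
      · apply fix_of _ (by assumption) _ 1 1 1
        rw [Units.val_one, one_smul, h3.unit_spec]
    · rintro ⟨u, hu⟩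
      rw [h2.unit_spec, h1.unit_spec] at hu
      have := congrFun (congrFun hu 1) 0
      simpa using this
    · rintro ⟨u, hu⟩
      rw [h3.unit_spec, h1.unit_spec] at hu
      have := congrFun (congrFun hu 1) 0
      simpa using this
    · rintro ⟨u, hu⟩
      rw [h3.unit_spec, h2.unit_spec] at hu
      have h11 := congrFun (congrFun hu 1) 1
      simp at h11


end CremonaPaper
end

section
/- Let k be a perfect field with algebraic closure k̄, and let {p₁,p₂,p₃} ⊆ ℙ²(k̄) be a Gal(k̄/k)-orbit of size 3 whose three points are not collinear. Then no k-rational point r ∈ ℙ²(k) is collinear with two of the points p₁, p₂, p₃. -/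
open scoped LinearAlgebra.Projectivization

namespace CremonaPaper

variable {k K : Type} [Field k] [Field K] [Algebra k K]

lemma galFun_ne_zero {n : ℕ} (g : K ≃ₐ[k] K) {v : Fin n → K} (hv : v ≠ 0) :
    (fun i => g (v i)) ≠ 0 := by
  intro h
  apply hv
  funext i
  have hi : g (v i) = 0 := congrFun h i
  show v i = 0
  exact g.injective (by rw [map_zero]; exact hi)

lemma galAct_mk {n : ℕ} (g : K ≃ₐ[k] K) (v : Fin n → K) (hv : v ≠ 0)
    (hv' : (fun i => g (v i)) ≠ 0) :
    galAct g (Projectivization.mk K v hv) = Projectivization.mk K (fun i => g (v i)) hv' := by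
  unfold galAct
  obtain ⟨a, ha⟩ := Projectivization.exists_smul_eq_mk_rep K v hv
  rw [Projectivization.mk_eq_mk_iff']
  refine ⟨g a, ?_⟩
  funext i
  simp only [Pi.smul_apply, smul_eq_mul, ← map_mul]
  congr 1
  rw [← ha]
  rfl

lemma galAct_one {n : ℕ} (P : ℙ K (Fin n → K)) : galAct (1 : K ≃ₐ[k] K) P = P := by
  conv_rhs => rw [← P.mk_rep]
  rfl

lemma galAct_mul {n : ℕ} (g h : K ≃ₐ[k] K) (P : ℙ K (Fin n → K)) :
    galAct g (galAct h P) = galAct (g * h) P := by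
  show galAct g (Projectivization.mk K (fun i => h (P.rep i)) _) = _
  rw [galAct_mk]
  rfl

lemma galAct_injective {n : ℕ} (g : K ≃ₐ[k] K) :
    Function.Injective (galAct (n := n) (k := k) g) := by
  intro P Q h
  have : galAct g⁻¹ (galAct g P) = galAct g⁻¹ (galAct g Q) := by rw [h]
  rwa [galAct_mul, galAct_mul, inv_mul_cancel, galAct_one, galAct_one] at this

lemma exists_unit_of_galAct_eq {n : ℕ} (g : K ≃ₐ[k] K) (P Q : ℙ K (Fin n → K))
    (h : galAct g P = Q) :
    ∃ c : Kˣ, (fun i => g (P.rep i)) = c • Q.rep := by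
  have h2 : Projectivization.mk K (fun i => g (P.rep i)) (galFun_ne_zero g P.rep_nonzero)
      = Projectivization.mk K Q.rep Q.rep_nonzero := by
    rw [Q.mk_rep]; exact h
  obtain ⟨c, hc⟩ := (Projectivization.mk_eq_mk_iff K _ _ _ _).1 h2
  exact ⟨c, hc.symm⟩

/-- Applying a field automorphism coordinatewise preserves linear independence of rows. -/
lemma li_map_iff {n : ℕ} (g : K ≃ₐ[k] K) (u : Fin n → Fin n → K) [DecidableEq (Fin n)] :
    LinearIndependent K (fun l i => g (u l i)) ↔ LinearIndependent K u := by
  let f : K →+* K := g.toAlgHom.toRingHom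
  have h1 : LinearIndependent K (fun l => ((Matrix.of u).map f) l)
      ↔ IsUnit ((Matrix.of u).map f) :=
    Matrix.linearIndependent_rows_iff_isUnit (A := (Matrix.of u).map f)
  have h2 : LinearIndependent K (fun l => (Matrix.of u) l) ↔ IsUnit (Matrix.of u) :=
    Matrix.linearIndependent_rows_iff_isUnit (A := Matrix.of u)
  have h3 : ((Matrix.of u).map f).det = f (Matrix.of u).det := by
    exact (RingHom.map_det f (Matrix.of u)).symm
  have h4 : IsUnit ((Matrix.of u).map f) ↔ IsUnit (Matrix.of u) := by
    rw [Matrix.isUnit_iff_isUnit_det, Matrix.isUnit_iff_isUnit_det, h3,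
      isUnit_iff_ne_zero, isUnit_iff_ne_zero]
    constructor
    · intro h hc; exact h (by rw [hc]; exact map_zero f)
    · intro h hc
      exact h (g.injective (by rw [map_zero]; exact hc))
  exact (h1.trans h4).trans h2.symm


variable [PerfectField k] [IsAlgClosure k K]

/-- implicit in Remark 6.15 / Lemma 2.6.
Let `{p₁,p₂,p₃} ⊆ ℙ²(K)` be a Galois orbit of size `3` whose three points are not collinear.
Then no `k`-rational point `r ∈ ℙ²(k)` is collinear with two of the points `p₁,p₂,p₃`. -/
theorem stmt11 (p : Fin 3 → ℙ K (Fin 3 → K)) (hinj : Function.Injective p)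
    (horb : Set.range p = {x | ∃ g : K ≃ₐ[k] K, x = galAct g (p 0)})
    (hncol : LinearIndependent K (fun i => (p i).rep))
    (r : ℙ K (Fin 3 → K))
    (hr : ∃ w : Fin 3 → k, ∃ hw : (fun i => algebraMap k K (w i)) ≠ 0,
      r = Projectivization.mk K (fun i => algebraMap k K (w i)) hw) :
    ∀ i j : Fin 3, i ≠ j →
      LinearIndependent K ![Projectivization.rep r, (p i).rep, (p j).rep] := by
  intro i j hij
  by_contra hdep
  set v : Fin 3 → Fin 3 → K := fun l => (p l).rep with hvdef
  -- r is fixed by the Galois action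
  have hfix : ∀ g : K ≃ₐ[k] K, galAct g r = r := by
    intro g
    obtain ⟨w, hw, rfl⟩ := hr
    rw [galAct_mk g _ hw (galFun_ne_zero g hw), Projectivization.mk_eq_mk_iff']
    exact ⟨1, by funext i; simp [g.commutes]⟩
  -- orbit facts
  have horb1 : ∀ l : Fin 3, ∃ g : K ≃ₐ[k] K, p l = galAct g (p 0) := by
    intro l
    have : p l ∈ Set.range p := ⟨l, rfl⟩
    rw [horb] at this
    exact this
  have horb2 : ∀ g : K ≃ₐ[k] K, ∃ l : Fin 3, galAct g (p 0) = p l := by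
    intro g
    have : galAct g (p 0) ∈ Set.range p := by rw [horb]; exact ⟨g, rfl⟩
    obtain ⟨l, hl⟩ := this
    exact ⟨l, hl.symm⟩
  -- transitivity
  have htrans : ∀ s t : Fin 3, ∃ g : K ≃ₐ[k] K, galAct g (p s) = p t := by
    intro s t
    obtain ⟨gs, hgs⟩ := horb1 s
    obtain ⟨gt, hgt⟩ := horb1 t
    refine ⟨gt * gs⁻¹, ?_⟩
    rw [hgs, galAct_mul, inv_mul_cancel_right, ← hgt]
  -- the third index
  have third : ∀ x y : Fin 3, x ≠ y → ∃ z : Fin 3, z ≠ x ∧ z ≠ y := by decide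
  obtain ⟨m, hmi, hmj⟩ := third i j hij
  obtain ⟨g, hg⟩ := htrans m i
  -- g sends p i, p j to points of the orbit
  have himg : ∀ l : Fin 3, ∃ l' : Fin 3, galAct g (p l) = p l' := by
    intro l
    obtain ⟨gl, hgl⟩ := horb1 l
    rw [hgl, galAct_mul]
    exact horb2 _
  obtain ⟨a, ha⟩ := himg i
  obtain ⟨b, hb⟩ := himg j
  have hai : a ≠ i := by
    rintro rfl
    exact hmi (hinj (galAct_injective g (hg.trans ha.symm)))
  have hbi : b ≠ i := by
    rintro rfl
    exact hmj (hinj (galAct_injective g (hg.trans hb.symm)))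
  have hab : a ≠ b := by
    rintro rfl
    exact hij (hinj (galAct_injective g (ha.trans hb.symm)))
  -- transport dependence along g
  have hdep2 : ¬ LinearIndependent K ![Projectivization.rep r, v a, v b] := by
    intro hli
    apply hdep
    obtain ⟨c0, hc0⟩ := exists_unit_of_galAct_eq g r r (hfix g)
    obtain ⟨c1, hc1⟩ := exists_unit_of_galAct_eq g (p i) (p a) ha
    obtain ⟨c2, hc2⟩ := exists_unit_of_galAct_eq g (p j) (p b) hb
    have hsmul := hli.units_smul ![c0, c1, c2]
    have heq : (![c0, c1, c2] • ![Projectivization.rep r, v a, v b])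
        = fun l i' => g ((![Projectivization.rep r, v i, v j]) l i') := by
      funext l
      fin_cases l
      · exact hc0.symm
      · exact hc1.symm
      · exact hc2.symm
    rw [heq] at hsmul
    exact (li_map_iff g _).1 hsmul
  -- the basis given by the orbit
  set B : Module.Basis (Fin 3) K (Fin 3 → K) :=
    basisOfLinearIndependentOfCardEqFinrank hncol (by simp) with hBdef
  have hB : ∀ l, B l = v l := fun l =>
    congrFun (coe_basisOfLinearIndependentOfCardEqFinrank hncol _) l
  have key : ∀ s t : Fin 3, s ≠ t → ¬ LinearIndependent K ![Projectivization.rep r, v s, v t] →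
      ∀ l : Fin 3, l ≠ s → l ≠ t → B.repr (Projectivization.rep r) l = 0 := by
    intro s t hst hd l hls hlt
    have hpair : LinearIndependent K ![v s, v t] := by
      have hcomp := hncol.comp ![s, t] (by
        intro x y hxy
        fin_cases x <;> fin_cases y <;> simp_all)
      have e : ((fun l => (p l).rep) ∘ ![s, t]) = ![v s, v t] := by
        funext x; fin_cases x <;> rfl
      rwa [e] at hcomp
    have hspan : Projectivization.rep r ∈ Submodule.span K (Set.range ![v s, v t]) := by
      by_contra hn
      exact hd ((linearIndependent_fin_cons (v := ![v s, v t])).2 ⟨hpair, hn⟩)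
    have hrange : Set.range ![v s, v t] = ⇑B '' {s, t} := by
      rw [Set.image_pair, hB, hB, Matrix.range_cons_cons_empty]
    rw [hrange, B.mem_span_image] at hspan
    by_contra h0
    have hmem : l ∈ (B.repr (Projectivization.rep r)).support := Finsupp.mem_support_iff.2 h0
    have := hspan hmem
    simp only [Set.mem_insert_iff, Set.mem_singleton_iff] at this
    tauto
  -- in both cases {a,b} = {j,m}, the repr vanishes at i and at m
  have pairCases : ∀ x y z a' b' : Fin 3, x ≠ y → z ≠ x → z ≠ y → a' ≠ x → b' ≠ x →
      a' ≠ b' → (a' = y ∧ b' = z) ∨ (a' = z ∧ b' = y) := by decide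
  have hcases : (a = j ∧ b = m) ∨ (a = m ∧ b = j) :=
    pairCases i j m a b hij hmi hmj hai hbi hab
  have hri : B.repr (Projectivization.rep r) i = 0 := by
    rcases hcases with ⟨haj, hbm⟩ | ⟨ham, hbj⟩
    · rw [haj, hbm] at hdep2 hab
      exact key j m hab hdep2 i hij (fun h => hmi h.symm)
    · rw [ham, hbj] at hdep2 hab
      exact key m j hab hdep2 i (fun h => hmi h.symm) hij
  have hrm : B.repr (Projectivization.rep r) m = 0 := key i j hij hdep m hmi hmj
  -- hence r = p j
  have cover3 : ∀ x y z l : Fin 3, x ≠ y → z ≠ x → z ≠ y → (l = x ∨ l = y ∨ l = z) := by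
    decide
  have hcover : ∀ l : Fin 3, l = i ∨ l = j ∨ l = m := fun l => cover3 i j m l hij hmi hmj
  have hsupp : ↑(B.repr (Projectivization.rep r)).support ⊆ ({j} : Set (Fin 3)) := by
    intro l hl
    rcases hcover l with rfl | rfl | rfl
    · exact absurd hri (Finsupp.mem_support_iff.1 hl)
    · rfl
    · exact absurd hrm (Finsupp.mem_support_iff.1 hl)
  have hmem : Projectivization.rep r ∈ Submodule.span K {v j} := by
    have := B.mem_span_image (m := Projectivization.rep r) (s := ({j} : Set (Fin 3)))
    rw [Set.image_singleton, hB] at this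
    exact this.2 hsupp
  obtain ⟨c, hc⟩ := Submodule.mem_span_singleton.1 hmem
  have hrpj : r = p j := by
    rw [← r.mk_rep, ← (p j).mk_rep, Projectivization.mk_eq_mk_iff']
    exact ⟨c, hc⟩
  obtain ⟨g', hg'⟩ := htrans j i
  apply hij
  apply hinj
  rw [← hg', ← hrpj, hfix g', hrpj]


end CremonaPaper
end
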